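/- arXiv:2201.06281 — 7 statements merged into one kernel-verified Lean document; each statement's English description precedes it below -/
import Mathlib

section
/- Let N, M, K be positive natural numbers, let L ≥ 2 be an integer, let E = {exp(i(2πm/L + π/L)) : m = 0, 1, …, L−1} ⊂ ℂ, and let S = {V ∈ ℂ^{N×M} : every entry of V belongs to E}. Fix B ∈ ℂ^{N×K} and W ∈ ℂ^{M×K}, and define f(V) = ‖B − V W‖_F² for V ∈ ℂ^{N×M}. Then there exists η̄ > 0 such that for every η > η̄ the following holds: every global minimizer of F_η(V) := f(V) − η‖V‖_F² over the convex hull of S (taken in ℂ^{N×M} viewed as a real vector space ℝ^{2NM}) belongs to S, and a matrix V ∈ S is a global minimizer of F_η over the convex hull of S if and only if it is a global minimizer of f over S. -/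
/-!
For `η > ‖W‖²` (Frobenius norm) the objective `F V = ‖B - V W‖² - η ‖V‖²` is strictly
concave: `F (a X + b Y) - a F X - b F Y = a b (η ‖X - Y‖² - ‖(X - Y) W‖²)` for `a + b = 1`,
which is positive by submultiplicativity of the Frobenius norm. A strictly concave function is
minimized over a convex set only at extreme points, and the extreme points of `conv S` lie in `S`.
By the minimum principle for concave functions, minimizing over `conv S` is the same as minimizing
over `S`, where all entries have modulus one, so the penalty is the constant `η N M`.
-/

open scoped Matrix.Norms.Frobenius

lemma norm_smul_add_smul_sq_real {E : Type*} [NormedAddCommGroup E] [InnerProductSpace ℝ E]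
    (x y : E) {a b : ℝ} (hab : a + b = 1) :
    ‖a • x + b • y‖ ^ 2 = a * ‖x‖ ^ 2 + b * ‖y‖ ^ 2 - a * b * ‖x - y‖ ^ 2 := by
  rw [norm_add_sq_real, norm_sub_sq_real, norm_smul, norm_smul, real_inner_smul_left,
    real_inner_smul_right, mul_pow, mul_pow, Real.norm_eq_abs, Real.norm_eq_abs, sq_abs, sq_abs]
  obtain rfl := eq_sub_of_add_eq hab
  ring

namespace Matrix

variable {l m n α : Type*} [Fintype l] [Fintype m] [Fintype n]

theorem frobenius_norm_sq [SeminormedAddCommGroup α] (A : Matrix m n α) :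
    ‖A‖ ^ 2 = ∑ i, ∑ j, ‖A i j‖ ^ 2 := by
  change ‖WithLp.toLp 2 fun i => WithLp.toLp 2 fun j => A i j‖ ^ 2 = _
  simp [PiLp.norm_sq_eq_of_L2]

theorem frobenius_norm_sq_of_forall_norm_eq_one [SeminormedAddCommGroup α] {A : Matrix m n α}
    (hA : ∀ i j, ‖A i j‖ = 1) : ‖A‖ ^ 2 = Fintype.card m * Fintype.card n := by
  simp [frobenius_norm_sq, hA]

theorem frobenius_norm_smul_add_smul_sq [NormedAddCommGroup α] [InnerProductSpace ℝ α]
    (A C : Matrix m n α) {a b : ℝ} (hab : a + b = 1) :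
    ‖a • A + b • C‖ ^ 2 = a * ‖A‖ ^ 2 + b * ‖C‖ ^ 2 - a * b * ‖A - C‖ ^ 2 := by
  simp only [frobenius_norm_sq, add_apply, smul_apply, sub_apply,
    norm_smul_add_smul_sq_real _ _ hab, Finset.sum_sub_distrib, Finset.sum_add_distrib,
    Finset.mul_sum]

theorem strictConcaveOn_norm_sub_mul_sq_sub_mul_norm_sq {𝕜 : Type*} [RCLike 𝕜]
    (B : Matrix l n 𝕜) (W : Matrix m n 𝕜) {η : ℝ} (hη : ‖W‖ ^ 2 < η) :
    StrictConcaveOn ℝ Set.univ fun V : Matrix l m 𝕜 => ‖B - V * W‖ ^ 2 - η * ‖V‖ ^ 2 := by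
  refine ⟨convex_univ, fun X _ Y _ hXY a b ha hb hab => ?_⟩
  have hres : B - (a • X + b • Y) * W = a • (B - X * W) + b • (B - Y * W) := by
    conv_lhs => rw [← one_smul ℝ B, ← hab]
    rw [Matrix.add_mul, Matrix.smul_mul, Matrix.smul_mul]
    module
  have hdiff : B - X * W - (B - Y * W) = -((X - Y) * W) := by
    rw [Matrix.sub_mul]; abel
  have hmul : ‖(X - Y) * W‖ ^ 2 ≤ ‖X - Y‖ ^ 2 * ‖W‖ ^ 2 := by
    rw [← mul_pow]
    exact pow_le_pow_left₀ (norm_nonneg _) (frobenius_norm_mul _ _) 2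
  have hpos : 0 < ‖X - Y‖ ^ 2 := by
    have := norm_pos_iff.mpr (sub_ne_zero.mpr hXY)
    positivity
  have hgap : ‖(X - Y) * W‖ ^ 2 < η * ‖X - Y‖ ^ 2 := by nlinarith
  simp only [smul_eq_mul]
  rw [hres, frobenius_norm_smul_add_smul_sq _ _ hab, frobenius_norm_smul_add_smul_sq _ _ hab,
    hdiff, norm_neg]
  nlinarith [mul_pos ha hb]

end Matrix

section Optimization

variable {𝕜 E β : Type*} [Field 𝕜] [LinearOrder 𝕜] [IsStrictOrderedRing 𝕜] [AddCommGroup E]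
  [Module 𝕜 E] [AddCommGroup β] [LinearOrder β] [IsOrderedAddMonoid β] [Module 𝕜 β]

theorem IsMinOn.mem_extremePoints_of_strictConcaveOn [PosSMulStrictMono 𝕜 β] {s : Set E}
    {f : E → β} {x : E} (hf : StrictConcaveOn 𝕜 s f) (hx : x ∈ s) (hmin : IsMinOn f s x) :
    x ∈ s.extremePoints 𝕜 := by
  refine mem_extremePoints.mpr ⟨hx, fun y hy z hz hseg => ?_⟩
  obtain rfl : y = z := by
    by_contra hyz
    exact (hf.lt_on_openSegment hy hz hyz hseg).not_ge
      (le_min (isMinOn_iff.mp hmin y hy) (isMinOn_iff.mp hmin z hz))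
  rw [openSegment_same] at hseg
  exact ⟨hseg.symm, hseg.symm⟩

theorem ConcaveOn.isMinOn_convexHull_iff [IsStrictOrderedModule 𝕜 β] {t : Set E} {f : E → β}
    {x : E} (hf : ConcaveOn 𝕜 (convexHull 𝕜 t) f) :
    IsMinOn f (convexHull 𝕜 t) x ↔ IsMinOn f t x := by
  refine ⟨fun h => h.on_subset (subset_convexHull 𝕜 t), fun h y hy => ?_⟩
  obtain ⟨z, hz, hzy⟩ := hf.exists_le_of_mem_convexHull (subset_convexHull 𝕜 t) hy
  exact (isMinOn_iff.mp h z hz).trans hzy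

end Optimization

theorem isMinOn_sub_iff_of_const_on {α : Type*} {s : Set α} {f g : α → ℝ} {c : ℝ} {x : α}
    (hg : ∀ y ∈ s, g y = c) (hx : x ∈ s) :
    IsMinOn (fun y => f y - g y) s x ↔ IsMinOn f s x := by
  simp only [isMinOn_iff]
  exact forall₂_congr fun y hy => by rw [hg y hy, hg x hx, sub_le_sub_iff_right]

theorem stmt0_general (N M K : ℕ)
    (L : ℕ)
    (E : Set ℂ)
    (hE : E = {z : ℂ | ∃ m : ℕ, m < L ∧
      z = Complex.exp (Complex.I * ((2 * Real.pi * m / L + Real.pi / L : ℝ) : ℂ))})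
    (S : Set (Matrix (Fin N) (Fin M) ℂ))
    (hS : S = {V | ∀ i j, V i j ∈ E})
    (B : Matrix (Fin N) (Fin K) ℂ) (W : Matrix (Fin M) (Fin K) ℂ)
    (f : Matrix (Fin N) (Fin M) ℂ → ℝ)
    (hf : ∀ V, f V = ∑ i, ∑ k, ‖(B - V * W) i k‖ ^ 2) :
    ∃ ηbar : ℝ, 0 < ηbar ∧ ∀ η : ℝ, ηbar < η →
      (∀ V ∈ convexHull ℝ S,
        IsMinOn (fun V => f V - η * ∑ i, ∑ j, ‖V i j‖ ^ 2) (convexHull ℝ S) V → V ∈ S) ∧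
      (∀ V ∈ S,
        (IsMinOn (fun V => f V - η * ∑ i, ∑ j, ‖V i j‖ ^ 2) (convexHull ℝ S) V ↔
          IsMinOn f S V)) := by
  have hunit : ∀ V ∈ S, ∀ i j, ‖V i j‖ = 1 := by
    subst hE hS
    rintro V hV i j
    obtain ⟨m, -, hm⟩ := hV i j
    rw [hm, mul_comm, Complex.norm_exp_ofReal_mul_I]
  obtain rfl : f = fun V => ‖B - V * W‖ ^ 2 := funext fun V => by rw [hf, Matrix.frobenius_norm_sq]
  simp only [← Matrix.frobenius_norm_sq]
  refine ⟨‖W‖ ^ 2 + 1, by positivity, fun η hη => ?_⟩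
  have hconc := (Matrix.strictConcaveOn_norm_sub_mul_sq_sub_mul_norm_sq B W
    ((lt_add_one _).trans hη)).subset (Set.subset_univ _) (convex_convexHull ℝ S)
  refine ⟨fun V hV hmin => extremePoints_convexHull_subset
    (hmin.mem_extremePoints_of_strictConcaveOn hconc hV), fun V hV => ?_⟩
  rw [hconc.concaveOn.isMinOn_convexHull_iff]
  exact isMinOn_sub_iff_of_const_on
    (fun U hU => by rw [Matrix.frobenius_norm_sq_of_forall_norm_eq_one (hunit U hU)]) hV

/-- Lemma 1 of the paper: for a large enough penalty η, the discrete-phase analog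
precoder design problem is equivalent to its penalized relaxation over the convex hull. -/
theorem stmt0 (N M K : ℕ) (hN : 0 < N) (hM : 0 < M) (hK : 0 < K)
    (L : ℕ) (hL : 2 ≤ L)
    (E : Set ℂ)
    (hE : E = {z : ℂ | ∃ m : ℕ, m < L ∧
      z = Complex.exp (Complex.I * ((2 * Real.pi * m / L + Real.pi / L : ℝ) : ℂ))})
    (S : Set (Matrix (Fin N) (Fin M) ℂ))
    (hS : S = {V | ∀ i j, V i j ∈ E})
    (B : Matrix (Fin N) (Fin K) ℂ) (W : Matrix (Fin M) (Fin K) ℂ)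
    (f : Matrix (Fin N) (Fin M) ℂ → ℝ)
    (hf : ∀ V, f V = ∑ i, ∑ k, ‖(B - V * W) i k‖ ^ 2) :
    ∃ ηbar : ℝ, 0 < ηbar ∧ ∀ η : ℝ, ηbar < η →
      (∀ V ∈ convexHull ℝ S,
        IsMinOn (fun V => f V - η * ∑ i, ∑ j, ‖V i j‖ ^ 2) (convexHull ℝ S) V → V ∈ S) ∧
      (∀ V ∈ S,
        (IsMinOn (fun V => f V - η * ∑ i, ∑ j, ‖V i j‖ ^ 2) (convexHull ℝ S) V ↔
          IsMinOn f S V)) :=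
  stmt0_general N M K L E hE S hS B W f hf
end

section
/- Let a ≥ 0, b ≥ 0, and c > 0 be real numbers. Then the function f(x) = log(1 + ax/(bx+c)) is concave on [0, ∞): for all x, y ≥ 0 and t ∈ [0,1], f(t x + (1−t) y) ≥ t f(x) + (1−t) f(y). -/
/-- Appendix A key step: f(x) = log(1 + ax/(bx+c)) is concave on [0, ∞)
for a, b ≥ 0 and c > 0. -/
theorem stmt5 (a b c : ℝ) (ha : 0 ≤ a) (hb : 0 ≤ b) (hc : 0 < c) :
    ∀ x : ℝ, 0 ≤ x → ∀ y : ℝ, 0 ≤ y → ∀ t : ℝ, 0 ≤ t → t ≤ 1 →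
      t * Real.log (1 + a * x / (b * x + c)) + (1 - t) * Real.log (1 + a * y / (b * y + c)) ≤
        Real.log (1 + a * (t * x + (1 - t) * y) / (b * (t * x + (1 - t) * y) + c)) := by
  intro x hx y hy t ht ht1
  set z : ℝ := t * x + (1 - t) * y with hz
  have hs : 0 ≤ 1 - t := by linarith
  have hzpos : 0 ≤ z := by positivity
  have hdx : 0 < b * x + c := by positivity
  have hdy : 0 < b * y + c := by positivity
  have hdz : 0 < b * z + c := by positivity
  have hgx1 : (1:ℝ) ≤ 1 + a * x / (b * x + c) := by
    have : 0 ≤ a * x / (b * x + c) := by positivity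
    linarith
  have hgy1 : (1:ℝ) ≤ 1 + a * y / (b * y + c) := by
    have : 0 ≤ a * y / (b * y + c) := by positivity
    linarith
  have hgx : (0:ℝ) < 1 + a * x / (b * x + c) := by linarith
  have hgy : (0:ℝ) < 1 + a * y / (b * y + c) := by linarith
  -- concavity of the inner function g(x) = 1 + a x / (b x + c)
  have key : (1 + a * z / (b * z + c))
      - (t * (1 + a * x / (b * x + c)) + (1 - t) * (1 + a * y / (b * y + c)))
      = a * b * c * t * (1 - t) * (x - y) ^ 2
        / ((b * x + c) * (b * y + c) * (b * z + c)) := by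
    rw [hz]
    field_simp
    ring
  have hkeynn : 0 ≤ a * b * c * t * (1 - t) * (x - y) ^ 2
        / ((b * x + c) * (b * y + c) * (b * z + c)) := by positivity
  have hinner : t * (1 + a * x / (b * x + c)) + (1 - t) * (1 + a * y / (b * y + c))
      ≤ 1 + a * z / (b * z + c) := by linarith
  -- combination is positive (in fact ≥ 1)
  have hcomb : (0:ℝ) < t * (1 + a * x / (b * x + c)) + (1 - t) * (1 + a * y / (b * y + c)) := by
    nlinarith
  -- concavity of log
  have hlogconc := strictConcaveOn_log_Ioi.concaveOn.2 (Set.mem_Ioi.mpr hgx) (Set.mem_Ioi.mpr hgy)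
    ht hs (by ring)
  simp only [smul_eq_mul] at hlogconc
  calc t * Real.log (1 + a * x / (b * x + c)) + (1 - t) * Real.log (1 + a * y / (b * y + c))
      ≤ Real.log (t * (1 + a * x / (b * x + c)) + (1 - t) * (1 + a * y / (b * y + c))) :=
        hlogconc
    _ ≤ Real.log (1 + a * z / (b * z + c)) := Real.log_le_log hcomb hinner
end

section
/- Let N and K be positive natural numbers, let v ∈ ℂ^N and b₁, …, b_K ∈ ℂ^N be fixed vectors, let N₀ > 0 be a real number, and let g be a complex-valued random variable on a probability space with 𝔼[|g|²] = γ < ∞. Define the random channel vector h = g·v. Then for every index k ∈ {1, …, K}: 𝔼[log(1 + |b_k^H h|² / (Σ_{ℓ≠k} |b_ℓ^H h|² + N₀))] ≤ log(1 + γ|v^H b_k|² / (Σ_{ℓ≠k} γ|v^H b_ℓ|² + N₀)). -/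
open MeasureTheory
open scoped BigOperators

/-!
Since `h = g • v`, every received power `|⟪b_ℓ, h⟫|²` is `|g|²` times a constant, so the rate is
`φ(|g|²)` with `φ x = log (1 + x a / (x S + N₀))` concave on `[0, ∞)`. Rather than invoking Jensen,
we bound `φ` by its tangent line at `γ = 𝔼|g|²`; taking expectations kills the linear term. The
rate is nonnegative, so no integrability of it is needed for the comparison.
-/

lemma Real.log_one_add_mul_div_le_tangent {a b c x y : ℝ} (ha : 0 ≤ a) (hb : 0 ≤ b)
    (hc : 0 < c) (hx : 0 ≤ x) (hy : 0 ≤ y) :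
    Real.log (1 + x * a / (x * b + c)) ≤
      Real.log (1 + y * a / (y * b + c)) + c * a / ((y * (a + b) + c) * (y * b + c)) * (x - y) := by
  have hbx : 0 < x * b + c := by positivity
  have hby : 0 < y * b + c := by positivity
  have hp : 1 + x * a / (x * b + c) = (x * (a + b) + c) / (x * b + c) := by
    field_simp; ring
  have hq : 1 + y * a / (y * b + c) = (y * (a + b) + c) / (y * b + c) := by
    field_simp; ring
  have hratio : Real.log (1 + x * a / (x * b + c)) - Real.log (1 + y * a / (y * b + c)) ≤
      (1 + x * a / (x * b + c)) / (1 + y * a / (y * b + c)) - 1 := by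
    rw [← Real.log_div (by positivity) (by positivity)]
    exact Real.log_le_sub_one_of_pos (by positivity)
  have hsecant : (1 + x * a / (x * b + c)) / (1 + y * a / (y * b + c)) - 1 ≤
      c * a / ((y * (a + b) + c) * (y * b + c)) * (x - y) := by
    -- the two sides differ by a nonpositive multiple of `(x - y)²`
    rw [hp, hq, div_div_div_eq, div_sub_one (by positivity), div_mul_eq_mul_div,
      div_le_div_iff₀ (by positivity) (by positivity)]
    have : 0 ≤ c * a * b * (x - y) ^ 2 * ((y * (a + b) + c) * (y * b + c)) := by positivity
    nlinarith
  linarith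

lemma MeasureTheory.integral_le_of_le_affine {Ω : Type*} [MeasurableSpace Ω] {μ : Measure Ω}
    [IsProbabilityMeasure μ] {f X : Ω → ℝ} {C D : ℝ} (hf : 0 ≤ᵐ[μ] f) (hX : Integrable X μ)
    (hfX : ∀ᵐ ω ∂μ, f ω ≤ C + D * (X ω - ∫ ω, X ω ∂μ)) :
    ∫ ω, f ω ∂μ ≤ C := by
  have hcentered : Integrable (fun ω => D * (X ω - ∫ ω, X ω ∂μ)) μ :=
    (hX.sub (integrable_const _)).const_mul D
  calc ∫ ω, f ω ∂μ ≤ ∫ ω, C + D * (X ω - ∫ ω, X ω ∂μ) ∂μ :=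
        integral_mono_of_nonneg hf ((integrable_const C).add hcentered) hfX
    _ = C := by
      rw [integral_add (integrable_const C) hcentered, integral_const_mul,
        integral_sub hX (integrable_const _)]
      simp

theorem stmt7_general (N K : ℕ)
    {Ω : Type*} [MeasurableSpace Ω] (μ : Measure Ω) [IsProbabilityMeasure μ]
    (v : EuclideanSpace ℂ (Fin N)) (b : Fin K → EuclideanSpace ℂ (Fin N))
    (N₀ : ℝ) (hN₀ : 0 < N₀)
    (g : Ω → ℂ) (γ : ℝ)
    (hg2 : Integrable (fun ω => ‖g ω‖ ^ 2) μ)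
    (hγ : ∫ ω, ‖g ω‖ ^ 2 ∂μ = γ)
    (k : Fin K) :
    ∫ ω, Real.log (1 + ‖(inner ℂ (b k) (g ω • v) : ℂ)‖ ^ 2 /
        ((∑ ℓ ∈ Finset.univ.erase k, ‖(inner ℂ (b ℓ) (g ω • v) : ℂ)‖ ^ 2) + N₀)) ∂μ ≤
      Real.log (1 + γ * ‖(inner ℂ v (b k) : ℂ)‖ ^ 2 /
        ((∑ ℓ ∈ Finset.univ.erase k, γ * ‖(inner ℂ v (b ℓ) : ℂ)‖ ^ 2) + N₀)) := by
  have hfading : ∀ ℓ ω, ‖(inner ℂ (b ℓ) (g ω • v) : ℂ)‖ ^ 2 =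
      ‖g ω‖ ^ 2 * ‖(inner ℂ v (b ℓ) : ℂ)‖ ^ 2 := fun ℓ ω => by
    rw [inner_smul_right, norm_mul, mul_pow, norm_inner_symm]
  simp_rw [hfading, ← Finset.mul_sum]
  subst hγ
  set a := ‖(inner ℂ v (b k) : ℂ)‖ ^ 2
  set S := ∑ ℓ ∈ Finset.univ.erase k, ‖(inner ℂ v (b ℓ) : ℂ)‖ ^ 2
  have hS : 0 ≤ S := Finset.sum_nonneg fun ℓ _ => by positivity
  have hγ0 : 0 ≤ ∫ ω, ‖g ω‖ ^ 2 ∂μ := integral_nonneg fun ω => by positivity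
  refine integral_le_of_le_affine (ae_of_all _ fun ω => Real.log_nonneg ?_) hg2
    (ae_of_all _ fun ω =>
      Real.log_one_add_mul_div_le_tangent (by positivity) hS hN₀ (by positivity) hγ0)
  exact le_add_of_nonneg_right (by positivity)

/-- Equation (22) of the paper: the ergodic per-user rate upper bound R_k ≤ R̄_k for the
rank-one channel h = g·v, proved via Jensen's inequality. -/
theorem stmt7 (N K : ℕ) (hN : 0 < N) (hK : 0 < K)
    {Ω : Type*} [MeasurableSpace Ω] (μ : Measure Ω) [IsProbabilityMeasure μ]
    (v : EuclideanSpace ℂ (Fin N)) (b : Fin K → EuclideanSpace ℂ (Fin N))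
    (N₀ : ℝ) (hN₀ : 0 < N₀)
    (g : Ω → ℂ) (γ : ℝ)
    (hg2 : Integrable (fun ω => ‖g ω‖ ^ 2) μ)
    (hγ : ∫ ω, ‖g ω‖ ^ 2 ∂μ = γ)
    (k : Fin K) :
    ∫ ω, Real.log (1 + ‖(inner ℂ (b k) (g ω • v) : ℂ)‖ ^ 2 /
        ((∑ ℓ ∈ Finset.univ.erase k, ‖(inner ℂ (b ℓ) (g ω • v) : ℂ)‖ ^ 2) + N₀)) ∂μ ≤
      Real.log (1 + γ * ‖(inner ℂ v (b k) : ℂ)‖ ^ 2 /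
        ((∑ ℓ ∈ Finset.univ.erase k, γ * ‖(inner ℂ v (b ℓ) : ℂ)‖ ^ 2) + N₀)) :=
  stmt7_general N K μ v b N₀ hN₀ g γ hg2 hγ k
end

section
/- Let K be a positive natural number, let c₁, …, c_K ∈ ℂ, let N₀ > 0 be a real number, and fix k ∈ {1, …, K}. Define e : ℂ → ℝ by e(u) = |u·c_k − 1|² + Σ_{i≠k} |u·c_i|² + N₀|u|², and SINR_k = |c_k|² / (Σ_{i≠k} |c_i|² + N₀). Then sup over u ∈ ℂ and ω > 0 of (log ω − ω·e(u) + 1) equals log(1 + SINR_k), and the supremum is attained at u* = conj(c_k)/(Σ_{i=1}^K |c_i|² + N₀) and ω* = 1/e(u*). -/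
/-!
Completing the square gives `e u = T ‖u - u*‖² + σ / T` with `σ = ∑_{i ≠ k} ‖c i‖² + N₀` and
`T = ‖c k‖² + σ`, so `e` is minimised at `u*` with value `σ / T = (1 + SINR)⁻¹`. For fixed
`m > 0`, `log ω - ω m + 1 ≤ -log m` is `log x ≤ x - 1` at `x = ω m`, with equality at `ω = m⁻¹`.
-/

open ComplexConjugate in
theorem norm_mul_sub_one_sq_add_mul_norm_sq (a u : ℂ) {σ : ℝ} (h : ‖a‖ ^ 2 + σ ≠ 0) :
    ‖u * a - 1‖ ^ 2 + σ * ‖u‖ ^ 2 =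
      (‖a‖ ^ 2 + σ) * ‖u - conj a / ((‖a‖ ^ 2 + σ : ℝ) : ℂ)‖ ^ 2 + σ / (‖a‖ ^ 2 + σ) := by
  have h' : a.re ^ 2 + a.im ^ 2 + σ ≠ 0 := by
    rwa [Complex.sq_norm, Complex.normSq_apply, ← sq, ← sq] at h
  simp only [Complex.sq_norm, Complex.normSq_apply, Complex.sub_re, Complex.sub_im,
    Complex.mul_re, Complex.mul_im, Complex.one_re, Complex.one_im, Complex.div_re,
    Complex.div_im, Complex.conj_re, Complex.conj_im, Complex.ofReal_re, Complex.ofReal_im]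
  field_simp
  ring

theorem log_sub_mul_add_one_le {w m : ℝ} (hw : 0 < w) (hm : 0 < m) :
    Real.log w - w * m + 1 ≤ -Real.log m := by
  have := Real.log_le_sub_one_of_pos (mul_pos hw hm)
  rw [Real.log_mul hw.ne' hm.ne'] at this
  linarith

theorem log_inv_sub_inv_mul_add_one {m : ℝ} (hm : m ≠ 0) :
    Real.log m⁻¹ - m⁻¹ * m + 1 = -Real.log m := by
  rw [Real.log_inv, inv_mul_cancel₀ hm]
  ring

theorem isGreatest_log_sub_mul_add_one {α : Type*} (f : α → ℝ) {u₀ : α} (hpos : 0 < f u₀)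
    (hmin : ∀ u, f u₀ ≤ f u) :
    IsGreatest {r : ℝ | ∃ (u : α) (w : ℝ), 0 < w ∧ r = Real.log w - w * f u + 1}
      (-Real.log (f u₀)) := by
  refine ⟨⟨u₀, (f u₀)⁻¹, inv_pos.mpr hpos, (log_inv_sub_inv_mul_add_one hpos.ne').symm⟩, ?_⟩
  rintro r ⟨u, w, hw, rfl⟩
  calc Real.log w - w * f u + 1 ≤ Real.log w - w * f u₀ + 1 := by
        gcongr
        exact hmin u
    _ ≤ -Real.log (f u₀) := log_sub_mul_add_one_le hw hpos

/-- The WMMSE rate–MSE equivalence: sup_{u ∈ ℂ, ω > 0} (log ω − ω e(u) + 1)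
equals log(1 + SINR_k), attained at the MMSE receiver u* and weight ω* = e(u*)⁻¹. -/
theorem stmt9 (K : ℕ) (c : Fin K → ℂ) (N₀ : ℝ) (hN₀ : 0 < N₀) (k : Fin K)
    (e : ℂ → ℝ)
    (he : ∀ u : ℂ, e u =
      ‖u * c k - 1‖ ^ 2 + (∑ i ∈ Finset.univ.erase k, ‖u * c i‖ ^ 2) + N₀ * ‖u‖ ^ 2)
    (SINR : ℝ)
    (hS : SINR = ‖c k‖ ^ 2 / ((∑ i ∈ Finset.univ.erase k, ‖c i‖ ^ 2) + N₀))
    (uStar : ℂ)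
    (hu : uStar = (starRingEnd ℂ) (c k) / (((∑ i, ‖c i‖ ^ 2) + N₀ : ℝ) : ℂ))
    (wStar : ℝ) (hw : wStar = (e uStar)⁻¹) :
    IsGreatest {r : ℝ | ∃ (u : ℂ) (w : ℝ), 0 < w ∧ r = Real.log w - w * e u + 1}
      (Real.log (1 + SINR)) ∧
    (0 < wStar ∧ Real.log wStar - wStar * e uStar + 1 = Real.log (1 + SINR)) := by
  set σ := (∑ i ∈ Finset.univ.erase k, ‖c i‖ ^ 2) + N₀
  have hσ : 0 < σ := by positivity
  have ht : 0 < ‖c k‖ ^ 2 + σ := by positivity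
  have hsq : ∀ u, e u = (‖c k‖ ^ 2 + σ) * ‖u - uStar‖ ^ 2 + σ / (‖c k‖ ^ 2 + σ) := by
    intro u
    rw [hu, ← Finset.add_sum_erase _ _ (Finset.mem_univ k), add_assoc,
      ← norm_mul_sub_one_sq_add_mul_norm_sq _ _ ht.ne', he, add_assoc, add_mul, Finset.sum_mul]
    simp only [norm_mul, mul_pow, mul_comm]
  have heStar : e uStar = σ / (‖c k‖ ^ 2 + σ) := by
    rw [hsq, sub_self, norm_zero, zero_pow two_ne_zero, mul_zero, zero_add]
  have hmin : ∀ u, e uStar ≤ e u := fun u => by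
    rw [heStar, hsq u]
    exact le_add_of_nonneg_left (by positivity)
  have hpos : 0 < e uStar := by
    rw [heStar]
    positivity
  have hlog : Real.log (1 + SINR) = -Real.log (e uStar) := by
    rw [hS, heStar, ← Real.log_inv, inv_div, add_div' _ _ _ hσ.ne', one_mul, add_comm σ]
  rw [hlog, hw]
  exact ⟨isGreatest_log_sub_mul_add_one e hpos hmin, inv_pos.mpr hpos,
    log_inv_sub_inv_mul_add_one hpos.ne'⟩
end

section
/- Let N, M, K be positive natural numbers, let c > 0 be a real number, let V ∈ ℂ^{N×M} satisfy V^H V = c·I_M, let B ∈ ℂ^{N×K} with V^H B ≠ 0, and let β > 0. Then W* = √β · V^H B / ‖V^H B‖_F is the unique global minimizer of the function W ↦ ‖B − V W‖_F² over the set {W ∈ ℂ^{M×K} : ‖W‖_F² = β}. -/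
/-!
With `A = Vᴴ B`, the hypothesis `Vᴴ V = c • 1` turns the objective into
`‖B‖² - 2 Re tr(Aᴴ W) + c ‖W‖²`, which on the sphere `‖W‖² = β` only depends on `Re tr(Aᴴ W)`.
For `W* = r A` on the same sphere, expanding `‖W* - W‖²` gives
`‖W* - W‖² = 2r (Re tr(Aᴴ W*) - Re tr(Aᴴ W))`, so the objective at `W` exceeds the one at `W*`
by exactly `‖W* - W‖² / r`, which is nonnegative and vanishes only at `W = W*`.
-/

open Matrix
open scoped BigOperators

namespace Matrix

variable {𝕜 : Type*} [RCLike 𝕜] {m n p : Type*} [Fintype m] [Fintype n] [Fintype p]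

def frobNormSq (X : Matrix m n 𝕜) : ℝ := ∑ i, ∑ j, ‖X i j‖ ^ 2

lemma frobNormSq_eq_re_trace (X : Matrix m n 𝕜) :
    frobNormSq X = RCLike.re (trace (Xᴴ * X)) := by
  simp only [frobNormSq, trace, diag, mul_apply, conjTranspose_apply, RCLike.star_def,
    RCLike.conj_mul, map_sum]
  rw [Finset.sum_comm]
  norm_cast

lemma frobNormSq_nonneg (X : Matrix m n 𝕜) : 0 ≤ frobNormSq X := by
  unfold frobNormSq; positivity

lemma frobNormSq_eq_zero_iff {X : Matrix m n 𝕜} : frobNormSq X = 0 ↔ X = 0 := by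
  have hrow (i : m) : 0 ≤ ∑ j, ‖X i j‖ ^ 2 := by positivity
  simp [frobNormSq, Finset.sum_eq_zero_iff_of_nonneg, hrow, ← Matrix.ext_iff]

lemma frobNormSq_pos {X : Matrix m n 𝕜} (hX : X ≠ 0) : 0 < frobNormSq X :=
  (frobNormSq_nonneg X).lt_of_ne' (mt frobNormSq_eq_zero_iff.mp hX)

lemma frobNormSq_smul (a : 𝕜) (X : Matrix m n 𝕜) :
    frobNormSq (a • X) = ‖a‖ ^ 2 * frobNormSq X := by
  simp only [frobNormSq, smul_apply, smul_eq_mul, norm_mul, mul_pow, Finset.mul_sum]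

lemma re_trace_conjTranspose_mul_comm (X Y : Matrix m n 𝕜) :
    RCLike.re (trace (Yᴴ * X)) = RCLike.re (trace (Xᴴ * Y)) := by
  rw [← conjTranspose_conjTranspose X, ← conjTranspose_mul, trace_conjTranspose,
    conjTranspose_conjTranspose, RCLike.star_def, RCLike.conj_re]

lemma frobNormSq_sub (X Y : Matrix m n 𝕜) :
    frobNormSq (X - Y) = frobNormSq X - 2 * RCLike.re (trace (Xᴴ * Y)) + frobNormSq Y := by
  simp only [frobNormSq_eq_re_trace, conjTranspose_sub, Matrix.sub_mul, Matrix.mul_sub,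
    trace_sub, map_sub, re_trace_conjTranspose_mul_comm X Y]
  ring

lemma frobNormSq_mul_of_conjTranspose_mul_self_eq [DecidableEq m] {V : Matrix p m 𝕜} {c : ℝ}
    (hV : Vᴴ * V = (c : 𝕜) • 1) (W : Matrix m n 𝕜) : frobNormSq (V * W) = c * frobNormSq W := by
  rw [frobNormSq_eq_re_trace, frobNormSq_eq_re_trace, conjTranspose_mul, Matrix.mul_assoc,
    ← Matrix.mul_assoc Vᴴ, hV, smul_mul, Matrix.one_mul, Matrix.mul_smul, trace_smul, smul_eq_mul,
    RCLike.re_ofReal_mul]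

lemma frobNormSq_ofReal_smul (r : ℝ) (X : Matrix m n 𝕜) :
    frobNormSq ((r : 𝕜) • X) = r ^ 2 * frobNormSq X := by
  rw [frobNormSq_smul, RCLike.norm_ofReal, sq_abs]

lemma re_trace_conjTranspose_mul_ofReal_smul (r : ℝ) (X : Matrix m n 𝕜) :
    RCLike.re (trace (Xᴴ * (r : 𝕜) • X)) = r * frobNormSq X := by
  rw [Matrix.mul_smul, trace_smul, smul_eq_mul, RCLike.re_ofReal_mul, frobNormSq_eq_re_trace]

lemma frobNormSq_ofReal_smul_sub {A W : Matrix m n 𝕜} {r : ℝ}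
    (hW : frobNormSq W = r ^ 2 * frobNormSq A) :
    frobNormSq ((r : 𝕜) • A - W) = 2 * r * (r * frobNormSq A - RCLike.re (trace (Aᴴ * W))) := by
  rw [frobNormSq_sub, frobNormSq_ofReal_smul, hW, conjTranspose_smul, smul_mul, trace_smul,
    RCLike.star_def, RCLike.conj_ofReal, smul_eq_mul, RCLike.re_ofReal_mul]
  ring

section Projection

variable [DecidableEq m] {V : Matrix p m 𝕜} {c : ℝ}

lemma frobNormSq_sub_mul_of_conjTranspose_mul_self_eq (hV : Vᴴ * V = (c : 𝕜) • 1)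
    (B : Matrix p n 𝕜) (W : Matrix m n 𝕜) :
    frobNormSq (B - V * W) =
      frobNormSq B - 2 * RCLike.re (trace ((Vᴴ * B)ᴴ * W)) + c * frobNormSq W := by
  rw [frobNormSq_sub, frobNormSq_mul_of_conjTranspose_mul_self_eq hV, conjTranspose_mul,
    conjTranspose_conjTranspose, Matrix.mul_assoc]

lemma frobNormSq_sub_mul_eq_add_of_frobNormSq_eq (hV : Vᴴ * V = (c : 𝕜) • 1)
    (B : Matrix p n 𝕜) {r : ℝ} (hr : 0 < r) {W : Matrix m n 𝕜}
    (hW : frobNormSq W = r ^ 2 * frobNormSq (Vᴴ * B)) :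
    frobNormSq (B - V * W) =
      frobNormSq (B - V * ((r : 𝕜) • (Vᴴ * B))) + frobNormSq ((r : 𝕜) • (Vᴴ * B) - W) / r := by
  rw [frobNormSq_sub_mul_of_conjTranspose_mul_self_eq hV,
    frobNormSq_sub_mul_of_conjTranspose_mul_self_eq hV, frobNormSq_ofReal_smul_sub hW,
    re_trace_conjTranspose_mul_ofReal_smul, frobNormSq_ofReal_smul, hW]
  field_simp
  ring

end Projection

end Matrix

theorem stmt12_general (N M K : ℕ)
    (c : ℝ)
    (V : Matrix (Fin N) (Fin M) ℂ)
    (hV : Vᴴ * V = ((c : ℝ) : ℂ) • (1 : Matrix (Fin M) (Fin M) ℂ))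
    (B : Matrix (Fin N) (Fin K) ℂ) (hVB : Vᴴ * B ≠ 0)
    (β : ℝ) (hβ : 0 < β)
    (Wstar : Matrix (Fin M) (Fin K) ℂ)
    (hW : Wstar = ((Real.sqrt β / Real.sqrt (∑ j, ∑ k, ‖(Vᴴ * B) j k‖ ^ 2) : ℝ) : ℂ)
      • (Vᴴ * B)) :
    (∑ j, ∑ k, ‖Wstar j k‖ ^ 2) = β ∧
    (∀ W : Matrix (Fin M) (Fin K) ℂ, (∑ j, ∑ k, ‖W j k‖ ^ 2) = β →
      (∑ i, ∑ k, ‖(B - V * Wstar) i k‖ ^ 2) ≤ ∑ i, ∑ k, ‖(B - V * W) i k‖ ^ 2) ∧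
    (∀ W : Matrix (Fin M) (Fin K) ℂ, (∑ j, ∑ k, ‖W j k‖ ^ 2) = β →
      (∑ i, ∑ k, ‖(B - V * W) i k‖ ^ 2) = (∑ i, ∑ k, ‖(B - V * Wstar) i k‖ ^ 2) →
      W = Wstar) := by
  change frobNormSq Wstar = β ∧
    (∀ W, frobNormSq W = β → frobNormSq (B - V * Wstar) ≤ frobNormSq (B - V * W)) ∧
    (∀ W, frobNormSq W = β → frobNormSq (B - V * W) = frobNormSq (B - V * Wstar) → W = Wstar)
  set r := Real.sqrt β / Real.sqrt (frobNormSq (Vᴴ * B))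
  have hS : 0 < frobNormSq (Vᴴ * B) := frobNormSq_pos hVB
  have hr : 0 < r := div_pos (Real.sqrt_pos.2 hβ) (Real.sqrt_pos.2 hS)
  have hrS : r ^ 2 * frobNormSq (Vᴴ * B) = β := by
    rw [div_pow, Real.sq_sqrt hβ.le, Real.sq_sqrt hS.le]
    field_simp
  obtain rfl : Wstar = (r : ℂ) • (Vᴴ * B) := hW
  have hgap (W : Matrix (Fin M) (Fin K) ℂ) (hWβ : frobNormSq W = β) :
      frobNormSq (B - V * W) = frobNormSq (B - V * ((r : ℂ) • (Vᴴ * B))) +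
        frobNormSq ((r : ℂ) • (Vᴴ * B) - W) / r :=
    frobNormSq_sub_mul_eq_add_of_frobNormSq_eq hV B hr (hWβ.trans hrS.symm)
  refine ⟨?_, fun W hWβ => ?_, fun W hWβ hmin => ?_⟩
  · exact (frobNormSq_ofReal_smul r _).trans hrS
  · rw [hgap W hWβ]
    exact le_add_of_nonneg_right (div_nonneg (frobNormSq_nonneg _) hr.le)
  · rw [hgap W hWβ, add_eq_left, div_eq_zero_iff, frobNormSq_eq_zero_iff, sub_eq_zero] at hmin
    exact (hmin.resolve_right hr.ne').symm

/-- The closed-form digital precoder (50) for the partially connected architecture: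
if VᴴV = c·I, VᴴB ≠ 0 and β > 0, then W* = √β·VᴴB/‖VᴴB‖_F is the unique global
minimizer of ‖B − VW‖_F² over the sphere ‖W‖_F² = β. -/
theorem stmt12 (N M K : ℕ) (hN : 0 < N) (hM : 0 < M) (hK : 0 < K)
    (c : ℝ) (hc : 0 < c)
    (V : Matrix (Fin N) (Fin M) ℂ)
    (hV : Vᴴ * V = ((c : ℝ) : ℂ) • (1 : Matrix (Fin M) (Fin M) ℂ))
    (B : Matrix (Fin N) (Fin K) ℂ) (hVB : Vᴴ * B ≠ 0)
    (β : ℝ) (hβ : 0 < β)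
    (Wstar : Matrix (Fin M) (Fin K) ℂ)
    (hW : Wstar = ((Real.sqrt β / Real.sqrt (∑ j, ∑ k, ‖(Vᴴ * B) j k‖ ^ 2) : ℝ) : ℂ)
      • (Vᴴ * B)) :
    (∑ j, ∑ k, ‖Wstar j k‖ ^ 2) = β ∧
    (∀ W : Matrix (Fin M) (Fin K) ℂ, (∑ j, ∑ k, ‖W j k‖ ^ 2) = β →
      (∑ i, ∑ k, ‖(B - V * Wstar) i k‖ ^ 2) ≤ ∑ i, ∑ k, ‖(B - V * W) i k‖ ^ 2) ∧
    (∀ W : Matrix (Fin M) (Fin K) ℂ, (∑ j, ∑ k, ‖W j k‖ ^ 2) = β →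
      (∑ i, ∑ k, ‖(B - V * W) i k‖ ^ 2) = (∑ i, ∑ k, ‖(B - V * Wstar) i k‖ ^ 2) →
      W = Wstar) :=
  stmt12_general N M K c V hV B hVB β hβ Wstar hW
end

section
/- Let N, M, K be positive natural numbers, let c > 0 and β > 0 be real numbers, let V ∈ ℂ^{N×M} satisfy V^H V = c·I_M, and let B ∈ ℂ^{N×K} with T := V^H B ≠ 0. Then ‖B − √β · V T / ‖T‖_F ‖_F² = ‖B‖_F² − 2√β · ‖T‖_F + β·c. -/
/-!
Write `T = VᴴB` and `s = √β / ‖T‖_F`. Since `VᴴV = c·I`, the Gram matrix of `B - s·VT` is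
`BᴴB - (2s - s²c)·TᴴT`; taking traces gives `‖B‖_F² - (2s - s²c)‖T‖_F²`, and the choice of `s`
turns `s‖T‖_F²` into `√β‖T‖_F` and `s²‖T‖_F²` into `β`.
-/

open Matrix
open scoped ComplexOrder

namespace Matrix

variable {m n p 𝕜 : Type*} [Fintype m] [Fintype n] [RCLike 𝕜]

theorem trace_conjTranspose_mul_self_eq_ofReal_sum_norm_sq (A : Matrix m n 𝕜) :
    (Aᴴ * A).trace = ((∑ i, ∑ j, ‖A i j‖ ^ 2 : ℝ) : 𝕜) := by
  simp only [trace, diag_apply, mul_apply, conjTranspose_apply, RCLike.star_def,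
    RCLike.conj_mul, RCLike.ofReal_sum, RCLike.ofReal_pow]
  exact Finset.sum_comm

theorem sum_norm_sq_pos_of_ne_zero {A : Matrix m n 𝕜} (hA : A ≠ 0) :
    0 < ∑ i, ∑ j, ‖A i j‖ ^ 2 := by
  refine lt_of_le_of_ne (by positivity) fun h => hA ?_
  rw [← trace_conjTranspose_mul_self_eq_zero_iff,
    trace_conjTranspose_mul_self_eq_ofReal_sum_norm_sq, ← h, RCLike.ofReal_zero]

variable [DecidableEq m]

theorem gram_sub_smul_mul_conjTranspose_mul {V : Matrix n m 𝕜} {c : ℝ}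
    (hV : Vᴴ * V = c • (1 : Matrix m m 𝕜)) (B : Matrix n p 𝕜) (s : ℝ) :
    (B - s • (V * (Vᴴ * B)))ᴴ * (B - s • (V * (Vᴴ * B)))
      = Bᴴ * B - (2 * s - s ^ 2 * c) • ((Vᴴ * B)ᴴ * (Vᴴ * B)) := by
  have hcross : Bᴴ * (V * (Vᴴ * B)) = (Vᴴ * B)ᴴ * (Vᴴ * B) := by
    rw [conjTranspose_mul, conjTranspose_conjTranspose, Matrix.mul_assoc]
  have hquad : (V * (Vᴴ * B))ᴴ * (V * (Vᴴ * B)) = c • ((Vᴴ * B)ᴴ * (Vᴴ * B)) := by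
    rw [conjTranspose_mul, Matrix.mul_assoc, ← Matrix.mul_assoc Vᴴ, hV, smul_mul,
      Matrix.one_mul, Matrix.mul_smul]
  have hcross' : (V * (Vᴴ * B))ᴴ * B = (Vᴴ * B)ᴴ * (Vᴴ * B) := by
    rw [conjTranspose_mul, Matrix.mul_assoc]
  rw [conjTranspose_sub, conjTranspose_smul, star_trivial, Matrix.sub_mul, Matrix.mul_sub,
    Matrix.mul_sub, smul_mul, smul_mul, Matrix.mul_smul, Matrix.mul_smul, hcross, hcross', hquad]
  module

variable [Fintype p]

theorem sum_norm_sq_sub_smul_mul_conjTranspose_mul {V : Matrix n m 𝕜} {c : ℝ}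
    (hV : Vᴴ * V = c • (1 : Matrix m m 𝕜)) (B : Matrix n p 𝕜) (s : ℝ) :
    ∑ i, ∑ k, ‖(B - s • (V * (Vᴴ * B))) i k‖ ^ 2
      = ∑ i, ∑ k, ‖B i k‖ ^ 2 - (2 * s - s ^ 2 * c) * ∑ j, ∑ k, ‖(Vᴴ * B) j k‖ ^ 2 := by
  apply RCLike.ofReal_injective (K := 𝕜)
  rw [← trace_conjTranspose_mul_self_eq_ofReal_sum_norm_sq,
    gram_sub_smul_mul_conjTranspose_mul hV, trace_sub, trace_smul,
    trace_conjTranspose_mul_self_eq_ofReal_sum_norm_sq,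
    trace_conjTranspose_mul_self_eq_ofReal_sum_norm_sq, RCLike.real_smul_eq_coe_mul]
  norm_cast

end Matrix

theorem stmt13_general (N M K : ℕ)
    (c : ℝ) (β : ℝ) (hβ : 0 < β)
    (V : Matrix (Fin N) (Fin M) ℂ)
    (hV : Vᴴ * V = ((c : ℝ) : ℂ) • (1 : Matrix (Fin M) (Fin M) ℂ))
    (B : Matrix (Fin N) (Fin K) ℂ)
    (T : Matrix (Fin M) (Fin K) ℂ) (hT : T = Vᴴ * B) (hTne : T ≠ 0) :
    (∑ i, ∑ k,
        ‖(B - ((Real.sqrt β / Real.sqrt (∑ j, ∑ k, ‖T j k‖ ^ 2) : ℝ) : ℂ) • (V * T)) i k‖ ^ 2)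
      = (∑ i, ∑ k, ‖B i k‖ ^ 2)
        - 2 * Real.sqrt β * Real.sqrt (∑ j, ∑ k, ‖T j k‖ ^ 2) + β * c := by
  set t := ∑ j, ∑ k, ‖T j k‖ ^ 2
  have ht : 0 < t := sum_norm_sq_pos_of_ne_zero hTne
  rw [Complex.coe_smul] at hV ⊢
  rw [hT, sum_norm_sq_sub_smul_mul_conjTranspose_mul hV, ← hT]
  have hst : Real.sqrt β / Real.sqrt t * t = Real.sqrt β * Real.sqrt t := by
    rw [div_mul_eq_mul_div, div_eq_iff (by positivity), mul_assoc, Real.mul_self_sqrt ht.le]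
  have hs2t : (Real.sqrt β / Real.sqrt t) ^ 2 * t = β := by
    rw [div_pow, Real.sq_sqrt hβ.le, Real.sq_sqrt ht.le, div_mul_cancel₀ _ ht.ne']
  linear_combination (-2) * hst + c * hs2t

/-- The expansion (52) of the paper: substituting the closed-form digital precoder back
into the objective gives ‖B − √β·V T/‖T‖_F‖_F² = ‖B‖_F² − 2√β‖T‖_F + βc,
where T = VᴴB and VᴴV = c·I. -/
theorem stmt13 (N M K : ℕ) (hN : 0 < N) (hM : 0 < M) (hK : 0 < K)
    (c : ℝ) (hc : 0 < c) (β : ℝ) (hβ : 0 < β)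
    (V : Matrix (Fin N) (Fin M) ℂ)
    (hV : Vᴴ * V = ((c : ℝ) : ℂ) • (1 : Matrix (Fin M) (Fin M) ℂ))
    (B : Matrix (Fin N) (Fin K) ℂ)
    (T : Matrix (Fin M) (Fin K) ℂ) (hT : T = Vᴴ * B) (hTne : T ≠ 0) :
    (∑ i, ∑ k,
        ‖(B - ((Real.sqrt β / Real.sqrt (∑ j, ∑ k, ‖T j k‖ ^ 2) : ℝ) : ℂ) • (V * T)) i k‖ ^ 2)
      = (∑ i, ∑ k, ‖B i k‖ ^ 2)
        - 2 * Real.sqrt β * Real.sqrt (∑ j, ∑ k, ‖T j k‖ ^ 2) + β * c :=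
  stmt13_general N M K c β hβ V hV B T hT hTne
end

section
/- Let L ≥ 2 be an integer, let E = {exp(i(2πm/L + π/L)) : m = 0, 1, …, L−1} ⊂ ℂ, and let P be the convex hull of E in ℂ viewed as ℝ². Let v ∈ ℂ with v ≠ 0, let ∠v ∈ [0, 2π) denote its argument, set m = ⌊(∠v + π/L)/(2π/L)⌋ and ṽ = v·exp(−i·2πm/L). Then the point Π(v) = exp(i·2πm/L)·( clamp(Re ṽ; 0, cos(π/L)) + i·clamp(Im ṽ; −sin(π/L), sin(π/L)) ) belongs to P and is the unique point of P closest to v in Euclidean distance, where clamp(x; a, b) = min{b, max{x, a}}. -/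
/-!
Rotating by `u = exp(2πi m/L)` maps `P` to itself and reduces everything to `ṽ = u⁻¹ v`, whose
argument lies in `[-π/L, π/L]` by the choice of `m`: `ṽ` lies in the cone
`cos(π/L) |Im| ≤ sin(π/L) Re` spanned by the vertices `e^{±iπ/L}`. For such a point the clamp `p`
of `ṽ` to the box `[0, cos(π/L)] × [-sin(π/L), sin(π/L)]` lies in the triangle
`0, e^{iπ/L}, e^{-iπ/L}` inside `P`, and it satisfies the variational inequality
`⟪ṽ - p, w - p⟫ ≤ 0` for every vertex `w`, since all vertices have `Re w ≤ cos(π/L)`. By convexity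
the inequality extends to all of `P`, and it characterizes the unique nearest point.
-/

open Complex
open scoped Real ComplexConjugate

section InnerProductSpace

variable {F : Type*} [NormedAddCommGroup F] [InnerProductSpace ℝ F]

theorem dist_sq_add_dist_sq_le_of_inner_nonpos {v p q : F} (h : inner ℝ (v - p) (q - p) ≤ 0) :
    dist v p ^ 2 + dist p q ^ 2 ≤ dist v q ^ 2 := by
  rw [dist_eq_norm, dist_eq_norm, dist_eq_norm, norm_sub_rev p q,
    show v - q = (v - p) - (q - p) by abel, norm_sub_sq_real (v - p)]
  linarith

theorem dist_le_dist_of_inner_nonpos {v p q : F} (h : inner ℝ (v - p) (q - p) ≤ 0) :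
    dist v p ≤ dist v q := by
  have hsq : dist v p ^ 2 ≤ dist v q ^ 2 := by
    linarith [dist_sq_add_dist_sq_le_of_inner_nonpos h, sq_nonneg (dist p q)]
  exact (pow_le_pow_iff_left₀ dist_nonneg dist_nonneg two_ne_zero).1 hsq

theorem eq_of_dist_eq_of_inner_nonpos {v p q : F} (h : inner ℝ (v - p) (q - p) ≤ 0)
    (hq : dist v q = dist v p) : q = p := by
  have hsq := dist_sq_add_dist_sq_le_of_inner_nonpos h
  rw [hq] at hsq
  have hpq : dist p q ^ 2 = 0 := le_antisymm (by linarith) (sq_nonneg _)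
  exact (dist_eq_zero.1 (pow_eq_zero_iff two_ne_zero |>.1 hpq)).symm

theorem inner_sub_nonpos_of_mem_convexHull {S : Set F} {a p q : F}
    (h : ∀ z ∈ S, inner ℝ a (z - p) ≤ 0) (hq : q ∈ convexHull ℝ S) : inner ℝ a (q - p) ≤ 0 := by
  have hconv : Convex ℝ {z : F | inner ℝ a (z - p) ≤ 0} := by
    simp only [inner_sub_right, sub_nonpos]
    exact convex_halfSpace_le (innerₛₗ ℝ a).isLinear _
  exact convexHull_min h hconv hq

end InnerProductSpace

theorem inner_mul_mul_of_norm_eq_one {u : ℂ} (hu : ‖u‖ = 1) (z w : ℂ) :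
    inner ℝ (u * z) (u * w) = inner ℝ z w := by
  have hu' : u * conj u = 1 := by
    rw [Complex.mul_conj, Complex.normSq_eq_norm_sq, hu]; simp
  simp only [Complex.inner, map_mul]
  rw [show u * w * (conj u * conj z) = (u * conj u) * (w * conj z) by ring, hu', one_mul]

theorem abs_sub_floor_mul_le {θ a : ℝ} (ha : 0 < a) :
    |θ - ⌊(θ + a) / (2 * a)⌋ * (2 * a)| ≤ a := by
  have h2a : 0 < 2 * a := by positivity
  have hlo := (le_div_iff₀ h2a).1 (Int.floor_le ((θ + a) / (2 * a)))
  have hhi := (div_lt_iff₀ h2a).1 (Int.lt_floor_add_one ((θ + a) / (2 * a)))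
  rw [abs_le]
  constructor <;> nlinarith

theorem cos_mul_abs_im_le_sin_mul_re {r φ β : ℝ} (hr : 0 ≤ r) (hφ : |φ| ≤ β) (hβ : β ≤ π) :
    Real.cos β * |((r : ℂ) * exp (φ * I)).im| ≤ Real.sin β * ((r : ℂ) * exp (φ * I)).re := by
  have hsin : 0 ≤ Real.sin (β - |φ|) :=
    Real.sin_nonneg_of_nonneg_of_le_pi (by linarith) (by linarith [abs_nonneg φ])
  rw [Real.sin_sub, Real.cos_abs, ← Real.abs_sin_eq_sin_abs_of_abs_le_pi (hφ.trans hβ)] at hsin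
  simp only [re_ofReal_mul, im_ofReal_mul, exp_ofReal_mul_I_re, exp_ofReal_mul_I_im, abs_mul,
    abs_of_nonneg hr]
  nlinarith

theorem Convex.smul_add_smul_mem_of_zero_mem {E : Type*} [AddCommGroup E] [Module ℝ E]
    {K : Set E} (hK : Convex ℝ K) (h0 : 0 ∈ K) {x y : E} (hx : x ∈ K) (hy : y ∈ K) {a b : ℝ}
    (ha : 0 ≤ a) (hb : 0 ≤ b) (hab : a + b ≤ 1) : a • x + b • y ∈ K := by
  have := hK.sum_mem (t := Finset.univ) (w := ![a, b, 1 - a - b]) (z := ![x, y, 0])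
    (by simp [Fin.forall_fin_succ]; exact ⟨ha, hb, by linarith⟩)
    (by simp [Fin.sum_univ_three])
    (by simp [Fin.forall_fin_succ, *])
  simpa [Fin.sum_univ_three] using this

/-- Over unit vectors `w` with `Re w ≤ c`, a functional `(a, |b|)` pointing into the cone spanned
by `(c, ±s)` is maximized at the endpoint `(c, s)`. -/
theorem mul_re_add_mul_im_le {c s a b : ℝ} {w : ℂ} (hc : 0 ≤ c) (hs : 0 ≤ s)
    (hcs : c ^ 2 + s ^ 2 = 1) (ha : 0 ≤ a) (hab : c * |b| ≤ s * a) (hw : ‖w‖ = 1)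
    (hwc : w.re ≤ c) : a * w.re + b * w.im ≤ a * c + |b| * s := by
  have hw2 : w.re ^ 2 + |w.im| ^ 2 = 1 := by
    have h := Complex.sq_norm w
    rw [hw, Complex.normSq_apply] at h
    rw [sq_abs]; linarith
  have him : b * w.im ≤ |b| * |w.im| := by rw [← abs_mul]; exact le_abs_self _
  have hunit : c * w.re + s * |w.im| ≤ 1 := by
    nlinarith [sq_nonneg (c * |w.im| - s * w.re), sq_nonneg (c * w.re + s * |w.im| - 1)]
  rcases le_or_gt |w.im| s with h | h
  · nlinarith [mul_nonneg ha (sub_nonneg.2 hwc), mul_nonneg (abs_nonneg b) (sub_nonneg.2 h)]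
  · have hc0 : 0 < c := by
      rcases hc.lt_or_eq with h' | h'
      · exact h'
      · exfalso; nlinarith [abs_nonneg w.im, sq_nonneg w.re]
    nlinarith [mul_nonneg ha (sub_nonneg.2 hunit), mul_nonneg (sub_nonneg.2 hab) (sub_pos.2 h).le,
      abs_nonneg b]

noncomputable def clampBox (c s : ℝ) (z : ℂ) : ℂ := ⟨min c (max z.re 0), min s (max z.im (-s))⟩

section clampBox

variable {c s : ℝ} {z : ℂ}

theorem re_nonneg_of_mul_abs_im_le (hc : 0 ≤ c) (hs : 0 < s) (hz : c * |z.im| ≤ s * z.re) :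
    0 ≤ z.re :=
  nonneg_of_mul_nonneg_right (by nlinarith [abs_nonneg z.im]) hs

theorem clampBox_re_of_nonneg (hre : 0 ≤ z.re) : (clampBox c s z).re = min c z.re := by
  simp [clampBox, max_eq_left hre]

theorem clampBox_im : (clampBox c s z).im = min s (max z.im (-s)) := rfl

theorem inner_sub_clampBox_nonpos (hc : 0 ≤ c) (hs : 0 < s) (hcs : c ^ 2 + s ^ 2 = 1)
    (hz : c * |z.im| ≤ s * z.re) {w : ℂ} (hw : ‖w‖ = 1) (hwc : w.re ≤ c) :
    inner ℝ (z - clampBox c s z) (w - clampBox c s z) ≤ 0 := by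
  have hx := clampBox_re_of_nonneg (c := c) (s := s) (re_nonneg_of_mul_abs_im_le hc hs hz)
  have hy : (clampBox c s z).im = min s (max z.im (-s)) := clampBox_im
  set x := (clampBox c s z).re
  set y := (clampBox c s z).im
  have ha : 0 ≤ z.re - x := by grind
  have hax : (z.re - x) * x = (z.re - x) * c := by grind
  have hby : (z.im - y) * y = |z.im - y| * s := by grind [abs_of_nonneg, abs_of_nonpos]
  have hab : c * |z.im - y| ≤ s * (z.re - x) := by
    have hb : |z.im - y| = max (|z.im| - s) 0 := by grind [abs_of_nonneg, abs_of_nonpos]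
    rw [hb, mul_max_of_nonneg _ _ hc, mul_zero]
    exact max_le (by nlinarith [min_le_left c z.re]) (mul_nonneg hs.le ha)
  have := mul_re_add_mul_im_le hc hs.le hcs ha hab hw hwc
  rw [Complex.inner]
  simp only [mul_re, sub_re, sub_im, conj_re, conj_im]
  nlinarith

theorem clampBox_mem {K : Set ℂ} (hK : Convex ℝ K) (h0 : 0 ∈ K) (hup : (⟨c, s⟩ : ℂ) ∈ K)
    (hdown : (⟨c, -s⟩ : ℂ) ∈ K) (hc : 0 ≤ c) (hs : 0 < s) (hz : c * |z.im| ≤ s * z.re) :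
    clampBox c s z ∈ K := by
  have hre := re_nonneg_of_mul_abs_im_le hc hs hz
  have hx := clampBox_re_of_nonneg (c := c) (s := s) hre
  have hy : (clampBox c s z).im = min s (max z.im (-s)) := clampBox_im
  set x := (clampBox c s z).re
  set y := (clampBox c s z).im
  have hx0 : 0 ≤ x := hx ▸ le_min hc hre
  have hxc : x ≤ c := hx ▸ min_le_left _ _
  have hys : |y| ≤ s := by grind [abs_le]
  have hxy : c * |y| ≤ s * x := by
    have hyz : |y| ≤ |z.im| := by grind [abs_of_nonneg, abs_of_nonpos]
    rcases le_total z.re c with h | h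
    · rw [hx, min_eq_right h]; nlinarith
    · rw [hx, min_eq_left h]; nlinarith
  have hp : clampBox c s z = ⟨x, y⟩ := rfl
  -- `c = 0` happens for `L = 2`, where the triangle `0, c ± is` degenerates to a segment.
  rcases hc.eq_or_lt with hc0 | hc0
  · subst hc0
    rw [hp, show x = 0 by linarith, show (⟨0, y⟩ : ℂ) =
        ((s + y) / (2 * s) : ℝ) • ⟨0, s⟩ + ((s - y) / (2 * s) : ℝ) • ⟨0, -s⟩ by
      apply Complex.ext <;> simp only [add_re, add_im, smul_re, smul_im, smul_eq_mul] <;>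
        field_simp <;> ring]
    refine hK.smul_add_smul_mem_of_zero_mem h0 hup hdown ?_ ?_ (by field_simp; linarith) <;>
      apply div_nonneg _ (by positivity) <;> linarith [abs_le.1 hys]
  · rw [hp, show (⟨x, y⟩ : ℂ) = ((s * x + c * y) / (2 * c * s) : ℝ) • ⟨c, s⟩ +
        ((s * x - c * y) / (2 * c * s) : ℝ) • ⟨c, -s⟩ by
      apply Complex.ext <;> simp only [add_re, add_im, smul_re, smul_im, smul_eq_mul] <;>
        field_simp <;> ring]
    refine hK.smul_add_smul_mem_of_zero_mem h0 hup hdown ?_ ?_ ?_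
    · apply div_nonneg _ (by positivity); nlinarith [neg_abs_le y]
    · apply div_nonneg _ (by positivity); nlinarith [le_abs_self y]
    · rw [← add_div, div_le_one (by positivity)]; nlinarith

end clampBox

noncomputable def polygonVertex (L : ℕ) (j : ℤ) : ℂ := exp (((2 * j + 1) * π / L : ℝ) * I)

section polygonVertex

variable {L : ℕ}

@[simp]
theorem polygonVertex_re (j : ℤ) : (polygonVertex L j).re = Real.cos ((2 * j + 1) * π / L) :=
  exp_ofReal_mul_I_re _

@[simp]
theorem polygonVertex_im (j : ℤ) : (polygonVertex L j).im = Real.sin ((2 * j + 1) * π / L) :=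
  exp_ofReal_mul_I_im _

theorem norm_polygonVertex (j : ℤ) : ‖polygonVertex L j‖ = 1 := norm_exp_ofReal_mul_I _

theorem polygonVertex_zero : polygonVertex L 0 = ⟨Real.cos (π / L), Real.sin (π / L)⟩ := by
  apply Complex.ext <;> simp

theorem polygonVertex_neg_one : polygonVertex L (-1) = ⟨Real.cos (π / L), -Real.sin (π / L)⟩ := by
  have h : (2 * ((-1 : ℤ) : ℝ) + 1) * π / L = -(π / L) := by push_cast; ring
  apply Complex.ext
  · rw [polygonVertex_re, h, Real.cos_neg]
  · rw [polygonVertex_im, h, Real.sin_neg]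

theorem exp_mul_polygonVertex (m j : ℤ) :
    exp (I * ((2 * π * m / L : ℝ) : ℂ)) * polygonVertex L j = polygonVertex L (m + j) := by
  rw [polygonVertex, polygonVertex, ← Complex.exp_add]
  congr 1
  push_cast
  ring

theorem polygonVertex_add_mul (hL : L ≠ 0) (j q : ℤ) :
    polygonVertex L (j + L * q) = polygonVertex L j := by
  have hL' : (L : ℂ) ≠ 0 := by exact_mod_cast hL
  rw [polygonVertex, polygonVertex,
    show (((2 * ((j + L * q : ℤ) : ℝ) + 1) * π / L : ℝ) : ℂ) * I
      = (((2 * j + 1) * π / L : ℝ) : ℂ) * I + q * (2 * π * I) by push_cast; field_simp; ring,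
    Complex.exp_add, exp_int_mul_two_pi_mul_I, mul_one]

/-- The nearest multiple of `2π` to `(2j+1)π/L` leaves an odd multiple of `π/L` in `[-π, π]`. -/
theorem polygonVertex_re_le (hL : 0 < L) (j : ℤ) : (polygonVertex L j).re ≤ Real.cos (π / L) := by
  have hL' : (0 : ℝ) < L := by exact_mod_cast hL
  set k := round (((2 * j + 1 : ℤ) : ℝ) / (2 * L))
  set n : ℤ := 2 * (j - k * L) + 1
  have hround := abs_sub_round (((2 * j + 1 : ℤ) : ℝ) / (2 * L))
  have hn : 1 ≤ |(n : ℝ)| := by exact_mod_cast Int.one_le_abs (by omega)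
  have hnL : |(n : ℝ)| ≤ L := by
    have hn_eq : (n : ℝ) = 2 * L * (((2 * j + 1 : ℤ) : ℝ) / (2 * L) - k) := by
      push_cast [n]; field_simp; ring
    rw [hn_eq, abs_mul, abs_of_pos (by positivity)]
    nlinarith
  rw [polygonVertex_re,
    show (2 * j + 1) * π / L = n * π / L + k * (2 * π) by push_cast [n]; field_simp; ring,
    Real.cos_add_int_mul_two_pi, ← Real.cos_abs]
  have habs : |n * π / L| = |(n : ℝ)| * (π / L) := by
    rw [abs_div, abs_mul, abs_of_pos Real.pi_pos, abs_of_pos hL']; ring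
  apply Real.cos_le_cos_of_nonneg_of_le_pi (by positivity)
  · rw [habs]
    calc |(n : ℝ)| * (π / L) ≤ L * (π / L) := by gcongr
      _ = π := by field_simp
  · rw [habs]
    nlinarith [show 0 < π / L by positivity]

theorem range_polygonVertex (hL : 0 < L) : Set.range (polygonVertex L) =
    {z : ℂ | ∃ m : ℕ, m < L ∧ z = exp (I * ((2 * π * m / L + π / L : ℝ) : ℂ))} := by
  ext z
  constructor
  · rintro ⟨j, rfl⟩
    have hr0 : 0 ≤ j % L := Int.emod_nonneg j (by omega)
    have hrL : j % L < L := Int.emod_lt_of_pos j (by omega)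
    have hj : polygonVertex L (j % L) = polygonVertex L j := by
      rw [← polygonVertex_add_mul (by omega) (j % L) (j / L), Int.emod_add_mul_ediv]
    refine ⟨(j % L).toNat, by omega, ?_⟩
    have hcast : ((j % L).toNat : ℝ) = ((j % L : ℤ) : ℝ) := by
      exact_mod_cast Int.toNat_of_nonneg hr0
    rw [← hj, polygonVertex, mul_comm I, hcast]
    congr 3
    ring
  · rintro ⟨m, -, rfl⟩
    refine ⟨m, ?_⟩
    rw [polygonVertex, mul_comm I]
    congr 2
    push_cast
    ring

/-- The vertices are `e^{iπ/L}` times the `L`-th roots of unity, which sum to zero. -/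
theorem zero_mem_convexHull_range_polygonVertex (hL : 2 ≤ L) :
    (0 : ℂ) ∈ convexHull ℝ (Set.range (polygonVertex L)) := by
  have hζ := Complex.isPrimitiveRoot_exp L (by omega)
  have hvert (k : ℕ) : polygonVertex L k = polygonVertex L 0 * exp (2 * π * I / L) ^ k := by
    rw [← Complex.exp_nat_mul, polygonVertex, polygonVertex, ← Complex.exp_add]
    congr 1
    push_cast
    ring
  have hsum : ∑ k ∈ Finset.range L, polygonVertex L k = 0 := by
    simp_rw [hvert, ← Finset.mul_sum, hζ.geom_sum_eq_zero (by omega), mul_zero]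
  have := (Finset.range L).centerMass_mem_convexHull (R := ℝ) (s := Set.range (polygonVertex L))
    (w := fun _ => 1) (fun _ _ => zero_le_one) (by simp; omega) (z := fun k : ℕ => polygonVertex L k)
    (fun k _ => ⟨k, rfl⟩)
  simpa [Finset.centerMass, hsum] using this

theorem cos_pi_div_nonneg (hL : 2 ≤ L) : 0 ≤ Real.cos (π / L) :=
  Real.cos_nonneg_of_mem_Icc ⟨by linarith [Real.pi_pos, show 0 < π / L by positivity],
    div_le_div_of_nonneg_left Real.pi_pos.le two_pos (by exact_mod_cast hL)⟩

theorem sin_pi_div_pos (hL : 2 ≤ L) : 0 < Real.sin (π / L) := by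
  have hL' : (1 : ℝ) < L := by exact_mod_cast hL
  exact Real.sin_pos_of_pos_of_lt_pi (by positivity) (div_lt_self Real.pi_pos hL')

theorem cos_mul_abs_im_le_sin_mul_re_of_floor (hL : 0 < L) {v : ℂ} {θ : ℝ}
    (hθ : v = ‖v‖ * exp (I * θ)) {m : ℤ} (hm : m = ⌊(θ + π / L) / (2 * π / L)⌋) :
    Real.cos (π / L) * |(v * exp (-(I * ((2 * π * m / L : ℝ) : ℂ)))).im| ≤
      Real.sin (π / L) * (v * exp (-(I * ((2 * π * m / L : ℝ) : ℂ)))).re := by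
  have hπL : 0 < π / L := by positivity
  have hφ : |θ - m * (2 * π / L)| ≤ π / L := by
    have := abs_sub_floor_mul_le (θ := θ) hπL
    rwa [← mul_div_assoc, ← hm] at this
  have hrot : v * exp (-(I * ((2 * π * m / L : ℝ) : ℂ))) =
      (‖v‖ : ℂ) * exp ((θ - m * (2 * π / L) : ℝ) * I) := by
    nth_rewrite 1 [hθ]
    rw [mul_assoc, ← Complex.exp_add]
    congr 2
    push_cast
    ring
  rw [hrot]
  exact cos_mul_abs_im_le_sin_mul_re (norm_nonneg v) hφ
    (div_le_self Real.pi_pos.le (by exact_mod_cast hL))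

theorem inner_sub_mul_clampBox_nonpos (hL : 2 ≤ L) (m : ℤ) {z : ℂ}
    (hz : Real.cos (π / L) * |z.im| ≤ Real.sin (π / L) * z.re) {q : ℂ}
    (hq : q ∈ convexHull ℝ (Set.range (polygonVertex L))) :
    inner ℝ (exp (I * ((2 * π * m / L : ℝ) : ℂ)) * z -
        exp (I * ((2 * π * m / L : ℝ) : ℂ)) * clampBox (Real.cos (π / L)) (Real.sin (π / L)) z)
      (q - exp (I * ((2 * π * m / L : ℝ) : ℂ)) *
        clampBox (Real.cos (π / L)) (Real.sin (π / L)) z) ≤ 0 := by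
  refine inner_sub_nonpos_of_mem_convexHull ?_ hq
  rintro _ ⟨j, rfl⟩
  rw [← add_sub_cancel m j, ← exp_mul_polygonVertex, ← mul_sub, ← mul_sub,
    inner_mul_mul_of_norm_eq_one (norm_exp_I_mul_ofReal _)]
  exact inner_sub_clampBox_nonpos (cos_pi_div_nonneg hL) (sin_pi_div_pos hL)
    (Real.cos_sq_add_sin_sq _) hz (norm_polygonVertex _) (polygonVertex_re_le (by omega) _)

theorem mul_clampBox_mem_convexHull (hL : 2 ≤ L) (m : ℤ) {z : ℂ}
    (hz : Real.cos (π / L) * |z.im| ≤ Real.sin (π / L) * z.re) :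
    exp (I * ((2 * π * m / L : ℝ) : ℂ)) * clampBox (Real.cos (π / L)) (Real.sin (π / L)) z ∈
      convexHull ℝ (Set.range (polygonVertex L)) := by
  have hrot (j : ℤ) : exp (I * ((2 * π * m / L : ℝ) : ℂ)) * polygonVertex L j ∈
      convexHull ℝ (Set.range (polygonVertex L)) := by
    rw [exp_mul_polygonVertex]
    exact subset_convexHull ℝ _ ⟨_, rfl⟩
  refine clampBox_mem (K := LinearMap.mulLeft ℝ (exp (I * ((2 * π * m / L : ℝ) : ℂ))) ⁻¹' _)
    ((convex_convexHull ℝ _).linear_preimage _) ?_ ?_ ?_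
    (cos_pi_div_nonneg hL) (sin_pi_div_pos hL) hz
  · rw [Set.mem_preimage, map_zero]
    exact zero_mem_convexHull_range_polygonVertex hL
  · rw [← polygonVertex_zero]; exact hrot 0
  · rw [← polygonVertex_neg_one]; exact hrot (-1)

end polygonVertex

theorem stmt15_general (L : ℕ) (hL : 2 ≤ L)
    (E : Set ℂ)
    (hE : E = {z : ℂ | ∃ m : ℕ, m < L ∧
      z = Complex.exp (Complex.I * ((2 * Real.pi * m / L + Real.pi / L : ℝ) : ℂ))})
    (v : ℂ)
    (θ : ℝ)
    (hθ : v = ((‖v‖ : ℝ) : ℂ) * Complex.exp (Complex.I * (θ : ℂ)))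
    (m : ℤ) (hm : m = ⌊(θ + Real.pi / L) / (2 * Real.pi / L)⌋)
    (vt : ℂ) (hvt : vt = v * Complex.exp (-(Complex.I * ((2 * Real.pi * m / L : ℝ) : ℂ))))
    (Pv : ℂ)
    (hPv : Pv = Complex.exp (Complex.I * ((2 * Real.pi * m / L : ℝ) : ℂ)) *
      (((min (Real.cos (Real.pi / L)) (max vt.re 0) : ℝ) : ℂ) +
        Complex.I * ((min (Real.sin (Real.pi / L))
          (max vt.im (-(Real.sin (Real.pi / L)))) : ℝ) : ℂ))) :
    Pv ∈ convexHull ℝ E ∧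
    (∀ q ∈ convexHull ℝ E, dist v Pv ≤ dist v q) ∧
    (∀ q ∈ convexHull ℝ E, dist v q = dist v Pv → q = Pv) := by
  have hcone := cos_mul_abs_im_le_sin_mul_re_of_floor (by omega) hθ hm
  rw [← hvt] at hcone
  have hv : v = exp (I * ((2 * π * m / L : ℝ) : ℂ)) * vt := by
    rw [hvt, mul_left_comm, ← Complex.exp_add, add_neg_cancel, exp_zero, mul_one]
  have hPv' : Pv = exp (I * ((2 * π * m / L : ℝ) : ℂ)) *
      clampBox (Real.cos (π / L)) (Real.sin (π / L)) vt := by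
    rw [hPv]; congr 1; apply Complex.ext <;> simp [clampBox]
  have hvar (q : ℂ) (hq : q ∈ convexHull ℝ E) : inner ℝ (v - Pv) (q - Pv) ≤ 0 := by
    rw [hE, ← range_polygonVertex (by omega)] at hq
    rw [hv, hPv']
    exact inner_sub_mul_clampBox_nonpos hL m hcone hq
  refine ⟨?_, fun q hq => dist_le_dist_of_inner_nonpos (hvar q hq),
    fun q hq => eq_of_dist_eq_of_inner_nonpos (hvar q hq)⟩
  rw [hE, ← range_polygonVertex (by omega), hPv']
  exact mul_clampBox_mem_convexHull hL m hcone

/-- The closed-form element-wise projection (46) of the paper: Π(v) as given by the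
rotate–clamp–rotate-back formula belongs to the convex hull P of the discrete
phase-shifter values and is the unique point of P closest to v. -/
theorem stmt15 (L : ℕ) (hL : 2 ≤ L)
    (E : Set ℂ)
    (hE : E = {z : ℂ | ∃ m : ℕ, m < L ∧
      z = Complex.exp (Complex.I * ((2 * Real.pi * m / L + Real.pi / L : ℝ) : ℂ))})
    (v : ℂ) (hv : v ≠ 0)
    (θ : ℝ) (hθ0 : 0 ≤ θ) (hθ2 : θ < 2 * Real.pi)
    (hθ : v = ((‖v‖ : ℝ) : ℂ) * Complex.exp (Complex.I * (θ : ℂ)))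
    (m : ℤ) (hm : m = ⌊(θ + Real.pi / L) / (2 * Real.pi / L)⌋)
    (vt : ℂ) (hvt : vt = v * Complex.exp (-(Complex.I * ((2 * Real.pi * m / L : ℝ) : ℂ))))
    (Pv : ℂ)
    (hPv : Pv = Complex.exp (Complex.I * ((2 * Real.pi * m / L : ℝ) : ℂ)) *
      (((min (Real.cos (Real.pi / L)) (max vt.re 0) : ℝ) : ℂ) +
        Complex.I * ((min (Real.sin (Real.pi / L))
          (max vt.im (-(Real.sin (Real.pi / L)))) : ℝ) : ℂ))) :
    Pv ∈ convexHull ℝ E ∧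
    (∀ q ∈ convexHull ℝ E, dist v Pv ≤ dist v q) ∧
    (∀ q ∈ convexHull ℝ E, dist v q = dist v Pv → q = Pv) :=
  stmt15_general L hL E hE v θ hθ m hm vt hvt Pv hPv
end
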